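/- Let $(Z(t))_{t \in \mathbb{R}}$ be a Gaussian process with mean $u$, unit variance, and covariance $\operatorname{Cov}(Z(t), Z(s)) = \frac{\sin(t-s)}{t-s}$ for $t \ne s$. Then $\lim_{\delta \downarrow 0} \frac{1}{\delta} \mathbb{P}(Z(0) Z(\delta) < 0) = \frac{1}{\pi\sqrt{3}} e^{-u^2/2}$. -/

import Mathlib

/-!
Write `r = sin δ / δ`. The substitution `(x, y) = √(1 - r) (s - w, s + w)` diagonalises the
quadratic form of the bivariate normal density and maps the cone `{s² < w²}` onto `{xy < 0}`, so
the sign-change probability equals `√(1 - r) / (π √(1 + r))` times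
`∫_{s² < w²} exp (-(√(1 - r) s - u)² / (1 + r) - w²)`.
As `δ → 0`, the Taylor expansion of `sin` gives `1 - r ~ δ² / 6`, so the prefactor divided by `δ`
tends to `1 / (π √12)`; by dominated convergence the integral tends to
`e^{-u²/2} ∫_{s² < w²} e^{-w²} = 2 e^{-u²/2}`.
-/

open MeasureTheory Real Filter

open Set Topology

namespace Real

lemma tendsto_one_sub_sinc_div_sq :
    Tendsto (fun x : ℝ => (1 - sinc x) / x ^ 2) (𝓝[≠] 0) (𝓝 (1 / 6)) := by
  have hsmall : ∀ᶠ x in 𝓝[≠] (0 : ℝ), x ≠ 0 ∧ |x| ≤ 1 := by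
    filter_upwards [self_mem_nhdsWithin,
      nhdsWithin_le_nhds (Metric.closedBall_mem_nhds (0 : ℝ) one_pos)] with x hx h1
    exact ⟨hx, by simpa using h1⟩
  rw [tendsto_iff_norm_sub_tendsto_zero]
  have hbound : Tendsto (fun x : ℝ => x ^ 2 / 100) (𝓝[≠] 0) (𝓝 0) :=
    (Continuous.tendsto' (by fun_prop) 0 0 (by simp)).mono_left nhdsWithin_le_nhds
  refine squeeze_zero' (Eventually.of_forall fun _ => norm_nonneg _) ?_ hbound
  filter_upwards [hsmall] with x ⟨hx0, hx1⟩
  have hx3 : 0 < |x| ^ 3 := by positivity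
  have key : (1 - sinc x) / x ^ 2 - 1 / 6 = -(sin x - (x - x ^ 3 / 6)) / x ^ 3 := by
    rw [sinc_of_ne_zero hx0]; field_simp; ring
  rw [Real.norm_eq_abs, key, abs_div, abs_neg, abs_pow, div_le_iff₀ hx3, ← sq_abs x]
  calc |sin x - (x - x ^ 3 / 6)| ≤ |x| ^ 5 / 100 := sin_bound hx1
    _ = |x| ^ 2 / 100 * |x| ^ 3 := by ring

lemma tendsto_sqrt_one_sub_sinc_div :
    Tendsto (fun x : ℝ => √(1 - sinc x) / x) (𝓝[>] 0) (𝓝 (√6)⁻¹) := by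
  have h := (tendsto_one_sub_sinc_div_sq.mono_left
    (nhdsWithin_mono 0 fun x (hx : 0 < x) => hx.ne')).sqrt
  rw [one_div, sqrt_inv] at h
  refine h.congr' ?_
  filter_upwards [self_mem_nhdsWithin] with x (hx : 0 < x)
  rw [sqrt_div' _ (sq_nonneg x), sqrt_sq hx.le]

lemma tendsto_sinc_nhdsGT : Tendsto sinc (𝓝[>] 0) (𝓝 1) := by
  simpa using (continuous_sinc.tendsto 0).mono_left (nhdsWithin_le_nhds (s := Ioi 0))

lemma sinc_mem_Ioo {x : ℝ} (hx : x ≠ 0) : sinc x ∈ Ioo (-1) 1 := by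
  rw [mem_Ioo, ← abs_lt, sinc_of_ne_zero hx, abs_div, div_lt_one (abs_pos.mpr hx)]
  exact abs_sin_lt_abs hx

end Real

lemma integral_Ioi_mul_exp_neg_mul_sq {b : ℝ} (hb : 0 < b) :
    ∫ t in Ioi (0 : ℝ), t * exp (-b * t ^ 2) = (2 * b)⁻¹ := by
  have h : ∫ t in Ioi (0 : ℝ), ((t * exp (-b * t ^ 2) : ℝ) : ℂ) = (((2 * b)⁻¹ : ℝ) : ℂ) := by
    convert integral_mul_cexp_neg_mul_sq (b := b) (by simpa using hb) using 2 with t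
    · push_cast; ring_nf
    · push_cast; ring
  rw [integral_complex_ofReal] at h
  exact_mod_cast h

namespace GaussianSignChange

def cone : Set (ℝ × ℝ) := {p | p.2 ^ 2 < p.1 ^ 2}

lemma measurableSet_cone : MeasurableSet cone :=
  measurableSet_lt (by fun_prop) (by fun_prop)

noncomputable def coneMap (k : ℝ) : ℝ × ℝ →L[ℝ] ℝ × ℝ :=
  LinearMap.toContinuousLinearMap
    (Matrix.toLin (Module.Basis.finTwoProd ℝ) (Module.Basis.finTwoProd ℝ) !![-k, k; k, k])

lemma coneMap_apply (k : ℝ) (p : ℝ × ℝ) : coneMap k p = (k * (p.2 - p.1), k * (p.2 + p.1)) := by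
  simp only [coneMap, LinearMap.coe_toContinuousLinearMap', Matrix.toLin_finTwoProd_apply,
    Prod.mk.injEq]
  constructor <;> ring

lemma det_coneMap (k : ℝ) : (coneMap k).det = -(2 * k ^ 2) := by
  rw [coneMap, ContinuousLinearMap.det, LinearMap.coe_toContinuousLinearMap, LinearMap.det_toLin,
    Matrix.det_fin_two_of]
  ring

lemma injective_coneMap {k : ℝ} (hk : k ≠ 0) : Function.Injective (coneMap k) := by
  intro p q h
  simp only [coneMap_apply, Prod.mk.injEq, mul_right_inj' hk] at h
  exact Prod.ext (by linarith) (by linarith)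

lemma coneMap_image_cone {k : ℝ} (hk : k ≠ 0) : coneMap k '' cone = {q | q.1 * q.2 < 0} := by
  have hk2 : 0 < k ^ 2 := by positivity
  ext q
  constructor
  · rintro ⟨p, hp, rfl⟩
    have hp' : p.2 ^ 2 < p.1 ^ 2 := hp
    rw [coneMap_apply, mem_ofPred_eq]
    nlinarith
  · intro (hq : q.1 * q.2 < 0)
    refine ⟨((q.2 - q.1) / (2 * k), (q.2 + q.1) / (2 * k)), ?_, ?_⟩
    · show ((q.2 + q.1) / (2 * k)) ^ 2 < ((q.2 - q.1) / (2 * k)) ^ 2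
      rw [div_pow, div_pow, div_lt_div_iff_of_pos_right (by positivity)]
      nlinarith
    · rw [coneMap_apply]
      ext <;> field_simp <;> ring

lemma setIntegral_mul_neg_eq {k : ℝ} (hk : k ≠ 0) (f : ℝ × ℝ → ℝ) :
    ∫ q in {q : ℝ × ℝ | q.1 * q.2 < 0}, f q
      = 2 * k ^ 2 * ∫ p in cone, f (k * (p.2 - p.1), k * (p.2 + p.1)) := by
  rw [← coneMap_image_cone hk, integral_image_eq_integral_abs_det_fderiv_smul volume
    measurableSet_cone (fun p _ => (coneMap k).hasFDerivAt.hasFDerivWithinAt)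
    (injective_coneMap hk).injOn, ← integral_const_mul]
  simp only [det_coneMap, abs_neg, coneMap_apply, smul_eq_mul]
  rw [abs_of_nonneg (by positivity)]

lemma integrableOn_cone_exp_neg_sq : IntegrableOn (fun p : ℝ × ℝ => exp (-p.1 ^ 2)) cone := by
  have hg : Integrable fun x : ℝ => exp (-(1 / 2) * x ^ 2) := integrable_exp_neg_mul_sq (by norm_num)
  refine Integrable.mono' (hg.mul_prod hg).integrableOn (by fun_prop) ?_
  rw [ae_restrict_iff' measurableSet_cone]
  refine ae_of_all _ fun p (hp : p.2 ^ 2 < p.1 ^ 2) => ?_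
  rw [Real.norm_eq_abs, abs_of_pos (exp_pos _), ← exp_add]
  exact exp_le_exp.mpr (by nlinarith)

lemma integral_cone_exp_neg_sq : ∫ p in cone, exp (-p.1 ^ 2) = 2 := by
  have hslice (w : ℝ) :
      ∫ s, cone.indicator (fun p : ℝ × ℝ => exp (-p.1 ^ 2)) (w, s) = 2 * |w| * exp (-|w| ^ 2) := by
    have hsection : (fun s => cone.indicator (fun p : ℝ × ℝ => exp (-p.1 ^ 2)) (w, s))
        = (Ioo (-|w|) |w|).indicator (fun _ => exp (-w ^ 2)) := by
      ext s
      simp only [indicator_apply, cone, mem_ofPred_eq, mem_Ioo, ← abs_lt, sq_lt_sq]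
    rw [hsection, integral_indicator_const _ measurableSet_Ioo, volume_real_Ioo_of_le (by simp),
      sq_abs, smul_eq_mul]
    ring
  rw [← integral_indicator measurableSet_cone, Measure.volume_eq_prod,
    integral_prod _ (integrableOn_cone_exp_neg_sq.integrable_indicator measurableSet_cone)]
  simp_rw [hslice]
  rw [integral_comp_abs (f := fun t => 2 * t * exp (-t ^ 2))]
  simp_rw [mul_assoc]
  have h := integral_Ioi_mul_exp_neg_mul_sq one_pos
  simp only [neg_mul, one_mul] at h
  rw [integral_const_mul, h]
  norm_num

noncomputable def bivariateGaussianPdf (u r : ℝ) (p : ℝ × ℝ) : ℝ :=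
  (2 * π * √(1 - r ^ 2))⁻¹ *
    exp (-(((p.1 - u) ^ 2 + (p.2 - u) ^ 2 - 2 * r * (p.1 - u) * (p.2 - u)) / (2 * (1 - r ^ 2))))

noncomputable def coneIntegral (u r : ℝ) : ℝ :=
  ∫ p in cone, exp (-((√(1 - r) * p.2 - u) ^ 2 / (1 + r) + p.1 ^ 2))

lemma bivariateGaussianPdf_coneMap {r : ℝ} (hr : r ∈ Ioo (-1) 1) (u w s : ℝ) :
    2 * √(1 - r) ^ 2 * bivariateGaussianPdf u r (√(1 - r) * (s - w), √(1 - r) * (s + w))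
      = √(1 - r) / (π * √(1 + r)) * exp (-((√(1 - r) * s - u) ^ 2 / (1 + r) + w ^ 2)) := by
  obtain ⟨hr₁, hr₂⟩ := hr
  set k := √(1 - r)
  set m := √(1 + r)
  have hk : k ^ 2 = 1 - r := sq_sqrt (by linarith)
  have hkpos : 0 < k := sqrt_pos.mpr (by linarith)
  have hmpos : 0 < m := sqrt_pos.mpr (by linarith)
  have hsqrt : √(1 - r ^ 2) = k * m := by
    rw [show 1 - r ^ 2 = (1 - r) * (1 + r) by ring, sqrt_mul (by linarith)]
  have hquad : ((k * (s - w) - u) ^ 2 + (k * (s + w) - u) ^ 2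
      - 2 * r * (k * (s - w) - u) * (k * (s + w) - u)) / (2 * (1 - r ^ 2))
      = (k * s - u) ^ 2 / (1 + r) + w ^ 2 := by
    have h1 : (1 - r ^ 2) ≠ 0 := by nlinarith
    have h2 : (1 + r) ≠ 0 := by linarith
    rw [div_add' _ _ _ h2, div_eq_div_iff (by simpa using h1) h2]
    linear_combination 2 * w ^ 2 * (1 + r) ^ 2 * hk
  rw [bivariateGaussianPdf, hsqrt, hquad]
  field_simp

lemma setIntegral_bivariateGaussianPdf_mul_neg {r : ℝ} (hr : r ∈ Ioo (-1) 1) (u : ℝ) :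
    ∫ q in {q : ℝ × ℝ | q.1 * q.2 < 0}, bivariateGaussianPdf u r q
      = √(1 - r) / (π * √(1 + r)) * coneIntegral u r := by
  have hk : √(1 - r) ≠ 0 := (sqrt_pos.mpr (by linarith [hr.2])).ne'
  rw [setIntegral_mul_neg_eq hk, ← integral_const_mul, coneIntegral, ← integral_const_mul]
  simp_rw [bivariateGaussianPdf_coneMap hr]

lemma tendsto_coneIntegral_one (u : ℝ) :
    Tendsto (coneIntegral u) (𝓝 1) (𝓝 (2 * exp (-u ^ 2 / 2))) := by
  have hlim : coneIntegral u 1 = 2 * exp (-u ^ 2 / 2) := by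
    have hsplit (p : ℝ × ℝ) : exp (-((√(1 - 1) * p.2 - u) ^ 2 / (1 + 1) + p.1 ^ 2))
        = exp (-u ^ 2 / 2) * exp (-p.1 ^ 2) := by
      rw [← exp_add]; norm_num; ring_nf
    simp_rw [coneIntegral, hsplit, integral_const_mul, integral_cone_exp_neg_sq]
    ring
  rw [← hlim]
  refine tendsto_integral_filter_of_dominated_convergence (fun p => exp (-p.1 ^ 2))
    (Eventually.of_forall fun r => by fun_prop) ?_ integrableOn_cone_exp_neg_sq
    (ae_of_all _ fun p => ?_)
  · filter_upwards [Ioi_mem_nhds (show (-1 : ℝ) < 1 by norm_num)] with r (hr : -1 < r)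
    refine ae_of_all _ fun p => ?_
    rw [Real.norm_eq_abs, abs_of_pos (exp_pos _)]
    exact exp_le_exp.mpr (by
      have := div_nonneg (sq_nonneg (√(1 - r) * p.2 - u)) (show 0 ≤ 1 + r by linarith)
      linarith)
  · exact ContinuousAt.tendsto (by fun_prop (disch := norm_num))

end GaussianSignChange

open GaussianSignChange in
/-- `(Z(0), Z(δ))` is bivariate normal with mean `(u, u)`, unit variances and correlation
`sin δ / δ`, so `P(Z(0) Z(δ) < 0)` is the integral of its density over `{xy < 0}`. -/
theorem gaussian_sign_change_probability_asymptotics (u : ℝ) :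
    Tendsto (fun δ : ℝ =>
      (∫ p : ℝ × ℝ in {q : ℝ × ℝ | q.1 * q.2 < 0},
          (2 * π * Real.sqrt (1 - (Real.sin δ / δ) ^ 2))⁻¹ *
            Real.exp (-(((p.1 - u) ^ 2 + (p.2 - u) ^ 2
              - 2 * (Real.sin δ / δ) * (p.1 - u) * (p.2 - u))
              / (2 * (1 - (Real.sin δ / δ) ^ 2))))) / δ)
      (nhdsWithin 0 (Set.Ioi 0))
      (nhds (Real.exp (-u ^ 2 / 2) / (π * Real.sqrt 3))) := by
  have hconst : (√6)⁻¹ * (π * √(1 + 1))⁻¹ * (2 * exp (-u ^ 2 / 2))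
      = exp (-u ^ 2 / 2) / (π * √3) := by
    have h62 : √6 = √2 * √3 := by rw [← sqrt_mul zero_le_two]; norm_num
    rw [h62, one_add_one_eq_two]
    field_simp
    norm_num
  have hlim := (tendsto_sqrt_one_sub_sinc_div.mul
    (((tendsto_sinc_nhdsGT.const_add 1).sqrt.const_mul π).inv₀ (by positivity))).mul
    ((tendsto_coneIntegral_one u).comp tendsto_sinc_nhdsGT)
  rw [hconst] at hlim
  refine hlim.congr' ?_
  filter_upwards [self_mem_nhdsWithin] with δ (hδ : 0 < δ)
  rw [← sinc_of_ne_zero hδ.ne']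
  change _ = (∫ q in {q : ℝ × ℝ | q.1 * q.2 < 0}, bivariateGaussianPdf u (sinc δ) q) / δ
  rw [setIntegral_bivariateGaussianPdf_mul_neg (sinc_mem_Ioo hδ.ne')]
  simp only [Function.comp_apply]
  ring
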